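/- Let A = {0,1}, k = 2k'+1 odd, n ≥ k+1, n0 = n−k+1, and J = {n0, n0+2, …, n−2, n}. Let π be the cyclic permutation of the 8 pairs (0,00), (1,01), (2,11), (3,10), (4,10), (5,11), (6,01), (7,00) sending each listed pair to the next one and (7,00) back to (0,00). For every i ∈ [1, 2^n−1] and every j ∈ J with j ≠ n0, writing r' = μ(i,j) mod 2^{j−2}: if r' ≠ 0 then (Q^{[j]}_{[i]}, C^{[j]}_{[i]}) = (Q^{[j]}_{[i−1]}, θ(C^{[j]}_{[i−1]})), and if r' = 0 then (Q^{[j]}_{[i]}, C^{[j]}_{[i]}) = π(Q^{[j]}_{[i−2^{j−2}]}, C^{[j]}_{[i−2^{j−2}]}). -/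

import Mathlib

/-- Hamming distance between two words (lists) of the same length:
the number of positions in which they differ. -/
def hammingL {α : Type*} [DecidableEq α] (w w' : List α) : ℕ :=
  ((w.zip w').filter fun q => decide (q.1 ≠ q.2)).length

/-- `w` (restricted to indices `< N`) is a `σ_k`-Gray cycle over `X`:
its terms are pairwise distinct and enumerate `X` (a bijection from `[0, N-1]` onto `X`),
two consecutive terms have the same length and Hamming distance exactly `k`, and so do
the first and the last term. -/
def IsGrayCycleOn {α : Type*} [DecidableEq α] (k N : ℕ) (w : ℕ → List α)
    (X : Set (List α)) : Prop :=
  Set.BijOn w (Set.Iio N) X ∧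
  (∀ i, 1 ≤ i → i < N →
    (w (i - 1)).length = (w i).length ∧ hammingL (w (i - 1)) (w i) = k) ∧
  (0 < N → (w (N - 1)).length = (w 0).length ∧ hammingL (w (N - 1)) (w 0) = k)

/-- The bit complement `θ : 0 ↔ 1` on the binary alphabet `{0,1}`. -/
def cpl (x : Fin 2) : Fin 2 := x + 1

/-- The bit complement extended letterwise to binary words. -/
def cplW (w : List (Fin 2)) : List (Fin 2) := w.map cpl

/-- The reflected binary Gray code `g^{m,1}` over words of length `m`:
`g^{0,1} = (ε)` and `g^{m+1,1} = (0·g^{m,1}, 1·(g^{m,1})^R)`. -/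
def binGray : ℕ → List (List (Fin 2))
  | 0 => [[]]
  | m + 1 =>
      (binGray m).map (fun w => 0 :: w) ++ (binGray m).reverse.map (fun w => 1 :: w)

/-- The sequence `γ^{n0,1}`: `γ^{n0,1}_{[0]} = g^{n0,1}_{[0]}` and
`γ^{n0,1}_{[i]} = g^{n0,1}_{[2^{n0} - i]}` for `1 ≤ i ≤ 2^{n0} - 1`. -/
def gamma1 (n0 i : ℕ) : List (Fin 2) :=
  if i = 0 then (binGray n0).getD 0 [] else (binGray n0).getD (2 ^ n0 - i) []

/-- The sequence `ρ^{n0,1}`: `ρ^{n0,1}_{[0]} = g^{n0,1}_{[2^{n0}-1]}` and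
`ρ^{n0,1}_{[i]} = g^{n0,1}_{[i-1]}` for `1 ≤ i ≤ 2^{n0} - 1`. -/
def rho1 (n0 i : ℕ) : List (Fin 2) :=
  if i = 0 then (binGray n0).getD (2 ^ n0 - 1) [] else (binGray n0).getD (i - 1) []

/-- `grSeq n0 true t i` (resp. `grSeq n0 false t i`) is the term of index `i` of the
sequence `γ^{n0+2t, 2t+1}` (resp. `ρ^{n0+2t, 2t+1}`), built inductively: the base cases
are `γ^{n0,1}` and `ρ^{n0,1}`, and, writing `i = q·2^m + r` with `m = n0 + 2t` and
`r < 2^m`, `γ^{m+2, (2t+1)+2}_{[i]}` is `θ^r(00)·γ^{m,2t+1}_{[r]}`, `θ^r(01)·ρ^{m,2t+1}_{[r]}`,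
`θ^r(11)·γ^{m,2t+1}_{[r]}`, `θ^r(10)·ρ^{m,2t+1}_{[r]}` according to `q = 0, 1, 2, 3`, and
`ρ^{m+2, (2t+1)+2}_{[i]}` is `θ^r(10)·γ^{m,2t+1}_{[r]}`, `θ^r(11)·ρ^{m,2t+1}_{[r]}`,
`θ^r(01)·γ^{m,2t+1}_{[r]}`, `θ^r(00)·ρ^{m,2t+1}_{[r]}` according to `q = 0, 1, 2, 3`. -/
def grSeq (n0 : ℕ) : Bool → ℕ → ℕ → List (Fin 2)
  | b, 0, i => if b then gamma1 n0 i else rho1 n0 i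
  | b, t + 1, i =>
      cplW^[i % 2 ^ (n0 + 2 * t)]
        (if b then
          (if i / 2 ^ (n0 + 2 * t) = 0 then [0, 0]
           else if i / 2 ^ (n0 + 2 * t) = 1 then [0, 1]
           else if i / 2 ^ (n0 + 2 * t) = 2 then [1, 1] else [1, 0])
         else
          (if i / 2 ^ (n0 + 2 * t) = 0 then [1, 0]
           else if i / 2 ^ (n0 + 2 * t) = 1 then [1, 1]
           else if i / 2 ^ (n0 + 2 * t) = 2 then [0, 1] else [0, 0])) ++
        grSeq n0 (i / 2 ^ (n0 + 2 * t) % 2 == 0) t (i % 2 ^ (n0 + 2 * t))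

/-- For odd `k` and `n ≥ k + 1`, `gammaNK n k i` is the term `γ^{n,k}_{[i]}`
(here `n0 = n - k + 1` and `k = 2·(k/2) + 1`). -/
def gammaNK (n k i : ℕ) : List (Fin 2) := grSeq (n + 1 - k) true (k / 2) i

/-- For odd `k` and `n ≥ k + 1`, `rhoNK n k i` is the term `ρ^{n,k}_{[i]}`. -/
def rhoNK (n k i : ℕ) : List (Fin 2) := grSeq (n + 1 - k) false (k / 2) i

/-- The cyclic permutation `π` of the 8 pairs
`(0,00), (1,01), (2,11), (3,10), (4,10), (5,11), (6,01), (7,00)`,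
sending each listed pair to the next one and the last back to the first. -/
def piCyc (x : ℕ × List (Fin 2)) : ℕ × List (Fin 2) :=
  if x = (0, [0, 0]) then (1, [0, 1])
  else if x = (1, [0, 1]) then (2, [1, 1])
  else if x = (2, [1, 1]) then (3, [1, 0])
  else if x = (3, [1, 0]) then (4, [1, 0])
  else if x = (4, [1, 0]) then (5, [1, 1])
  else if x = (5, [1, 1]) then (6, [0, 1])
  else if x = (6, [0, 1]) then (7, [0, 0])
  else if x = (7, [0, 0]) then (0, [0, 0])
  else x

/-!
Unfolding the recursion, the two letters of `γ^{n,k}_{[i]}` at positions `j, j-1` are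
`θ^r(blockPair q)` with `r = i mod 2^{j-2}` and `q = ⌊i / 2^{j-2}⌋ mod 8`: `blockPair` lists the
headers `00, 01, 11, 10` of `γ` followed by the headers `10, 11, 01, 00` of `ρ`, so the headers
of `ρ^{m,·}_{[r]}` are those of `γ^{m,·}` read at `r + 2^m`. Since a level chooses `γ` or `ρ`
below it according to the parity of `⌊i / 2^m⌋`, the index seen below is `i` modulo `2^{m+1}`,
which does not change `q`. Stepping from `i - 1` to `i` inside a block of length `2^{j-2}`
therefore complements the pair, and stepping over a whole block advances `q` by one modulo 8
with `r = 0`, which is what `π` does.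
-/

def blockPair : ℕ → List (Fin 2)
  | 0 => [0, 0]
  | 1 => [0, 1]
  | 2 => [1, 1]
  | 3 => [1, 0]
  | 4 => [1, 0]
  | 5 => [1, 1]
  | 6 => [0, 1]
  | _ => [0, 0]

lemma length_cplW_iterate (r : ℕ) (w : List (Fin 2)) : (cplW^[r] w).length = w.length := by
  induction r generalizing w with
  | zero => rfl
  | succ r ih => rw [Function.iterate_succ_apply, ih, cplW, List.length_map]

lemma Nat.div_mod_eq_of_modEq {x y d k : ℕ} (h : x ≡ y [MOD d * k]) :
    x / d % k = y / d % k := by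
  rw [← Nat.mod_mul_right_div_self, ← Nat.mod_mul_right_div_self, h]

lemma Nat.mod_two_pow_add_ite (i m : ℕ) :
    i % 2 ^ m + (if (i / 2 ^ m % 2 == 0) = true then 0 else 2 ^ m) = i % 2 ^ (m + 1) := by
  rw [Nat.mod_pow_succ]
  rcases Nat.mod_two_eq_zero_or_one (i / 2 ^ m) with h | h <;> simp [h]

lemma Nat.sub_one_div_mod_of_mod_ne_zero {i d : ℕ} (h : i % d ≠ 0) :
    (i - 1) / d = i / d ∧ (i - 1) % d = i % d - 1 := by
  rcases Nat.eq_zero_or_pos d with rfl | hd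
  · simp
  rw [Nat.div_mod_unique hd]
  have := Nat.div_add_mod i d
  have := Nat.mod_lt i hd
  omega

lemma piCyc_blockPair (q : ℕ) :
    piCyc (q % 8, blockPair (q % 8)) = ((q + 1) % 8, blockPair ((q + 1) % 8)) := by
  rw [show (q + 1) % 8 = (q % 8 + 1) % 8 by omega]
  have hq : q % 8 < 8 := Nat.mod_lt q (by norm_num)
  generalize q % 8 = r at hq ⊢
  interval_cases r <;> rfl

section grSeq

variable (n0 : ℕ)

lemma take_two_grSeq_succ (b : Bool) (t i : ℕ) (hi : i < 2 ^ (n0 + 2 * (t + 1))) :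
    (grSeq n0 b (t + 1) i).take 2 =
      cplW^[i % 2 ^ (n0 + 2 * t)]
        (blockPair ((i + if b then 0 else 2 ^ (n0 + 2 * (t + 1))) / 2 ^ (n0 + 2 * t) % 8)) := by
  have hpow : 2 ^ (n0 + 2 * (t + 1)) = 2 ^ (n0 + 2 * t) * 4 := by ring
  have hq : i / 2 ^ (n0 + 2 * t) < 4 := Nat.div_lt_of_lt_mul (hpow ▸ hi)
  rw [grSeq, List.take_left' (by rw [length_cplW_iterate]; split_ifs <;> rfl)]
  congr 1
  cases b
  · simp only [Bool.false_eq_true, if_false]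
    rw [hpow, Nat.add_mul_div_left _ _ (by positivity)]
    generalize i / 2 ^ (n0 + 2 * t) = q at hq ⊢
    interval_cases q <;> rfl
  · simp only [if_true, add_zero]
    generalize i / 2 ^ (n0 + 2 * t) = q at hq ⊢
    interval_cases q <;> rfl

lemma drop_two_grSeq_succ (b : Bool) (t i : ℕ) :
    (grSeq n0 b (t + 1) i).drop 2 =
      grSeq n0 (i / 2 ^ (n0 + 2 * t) % 2 == 0) t (i % 2 ^ (n0 + 2 * t)) := by
  rw [grSeq, List.drop_left' (by rw [length_cplW_iterate]; split_ifs <;> rfl)]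

theorem grSeq_factor (t l : ℕ) (b : Bool) (i : ℕ) (hi : i < 2 ^ (n0 + 2 * (t + 1 + l))) :
    ((grSeq n0 b (t + 1 + l) i).drop (2 * l)).take 2 =
      cplW^[i % 2 ^ (n0 + 2 * t)]
        (blockPair ((i + if b then 0 else 2 ^ (n0 + 2 * (t + 1 + l))) / 2 ^ (n0 + 2 * t) % 8)) := by
  induction l generalizing b i with
  | zero => exact take_two_grSeq_succ n0 b t i hi
  | succ l ih =>
    set M := n0 + 2 * (t + 1 + l)
    rw [show t + 1 + (l + 1) = t + 1 + l + 1 by ring, show 2 * (l + 1) = 2 + 2 * l by ring,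
      ← List.drop_drop, drop_two_grSeq_succ, ih _ _ (Nat.mod_lt _ (by positivity)),
      Nat.mod_mod_of_dvd _ (pow_dvd_pow 2 (by omega)), Nat.mod_two_pow_add_ite]
    congr 2
    apply Nat.div_mod_eq_of_modEq
    have hdvd : 2 ^ (n0 + 2 * t) * 8 ∣ 2 ^ (M + 1) := by
      rw [show (8 : ℕ) = 2 ^ 3 by norm_num, ← pow_add]
      exact pow_dvd_pow 2 (by omega)
    refine Nat.ModEq.of_dvd hdvd ((Nat.mod_modEq i _).trans ?_)
    cases b
    · rw [if_neg Bool.false_ne_true, show n0 + 2 * (t + 1 + l + 1) = M + 1 + 1 by ring,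
        pow_succ _ (M + 1)]
      exact (Nat.add_mul_mod_self_left _ _ _).symm
    · simp [Nat.ModEq]

end grSeq

theorem gammaNK_factor {n k j i : ℕ} (hk : Odd k) (hn : k + 1 ≤ n) (hj : n - k + 1 < j)
    (hjn : j ≤ n) (hpar : (j - (n - k + 1)) % 2 = 0) (hi : i < 2 ^ n) :
    ((gammaNK n k i).drop (n - j)).take 2 =
      cplW^[i % 2 ^ (j - 2)] (blockPair (i / 2 ^ (j - 2) % 8)) := by
  obtain ⟨k', rfl⟩ := hk
  obtain ⟨t, l, ht, rfl⟩ : ∃ t l, j - 2 = n - 2 * k' + 2 * t ∧ k' = t + 1 + l :=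
    ⟨(j - 2 - (n - 2 * k')) / 2, (n - j) / 2, by omega, by omega⟩
  have hfac := grSeq_factor (n - 2 * (t + 1 + l)) t l true i
    (by rwa [show n - 2 * (t + 1 + l) + 2 * (t + 1 + l) = n by omega])
  rw [gammaNK, show n + 1 - (2 * (t + 1 + l) + 1) = n - 2 * (t + 1 + l) by omega,
    show (2 * (t + 1 + l) + 1) / 2 = t + 1 + l by omega, show n - j = 2 * l by omega, ht]
  simpa using hfac

theorem statement11_general (n k : ℕ) (hk : Odd k) (hn : k + 1 ≤ n) :
    ∀ j, n - k + 1 < j → j ≤ n → (j - (n - k + 1)) % 2 = 0 →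
    ∀ i, 1 ≤ i → i < 2 ^ n →
      (i % 2 ^ (j + 1) % 2 ^ (j - 2) ≠ 0 →
        (i % 2 ^ (j + 1) / 2 ^ (j - 2),
            ((gammaNK n k i).drop (n - j)).take 2) =
          ((i - 1) % 2 ^ (j + 1) / 2 ^ (j - 2),
            cplW (((gammaNK n k (i - 1)).drop (n - j)).take 2))) ∧
      (i % 2 ^ (j + 1) % 2 ^ (j - 2) = 0 →
        (i % 2 ^ (j + 1) / 2 ^ (j - 2),
            ((gammaNK n k i).drop (n - j)).take 2) =
          piCyc ((i - 2 ^ (j - 2)) % 2 ^ (j + 1) / 2 ^ (j - 2),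
            ((gammaNK n k (i - 2 ^ (j - 2))).drop (n - j)).take 2)) := by
  intro j hj hjn hpar i hi1 hi
  have hfac := fun x (hx : x < 2 ^ n) => gammaNK_factor hk hn hj hjn hpar hx
  have hblock : 2 ^ (j + 1) = 2 ^ (j - 2) * 8 := by
    rw [show (8 : ℕ) = 2 ^ 3 by norm_num, ← pow_add]; congr 1; omega
  have hQ (x : ℕ) : x % 2 ^ (j + 1) / 2 ^ (j - 2) = x / 2 ^ (j - 2) % 8 := by
    rw [hblock, Nat.mod_mul_right_div_self]
  rw [Nat.mod_mod_of_dvd _ (Dvd.intro _ hblock.symm), hQ, hQ, hQ]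
  refine ⟨fun hne => ?_, fun h0 => ?_⟩
  · obtain ⟨hdiv, hmod⟩ := Nat.sub_one_div_mod_of_mod_ne_zero hne
    obtain ⟨r, hr⟩ := Nat.exists_eq_succ_of_ne_zero hne
    rw [hfac i hi, hfac (i - 1) (by omega), hdiv, hmod, hr, Nat.succ_sub_one,
      Function.iterate_succ_apply']
  · have hle : 2 ^ (j - 2) * 1 ≤ i := by
      rw [mul_one]; exact Nat.le_of_dvd hi1 (Nat.dvd_of_mod_eq_zero h0)
    have hdiv : (i - 2 ^ (j - 2)) / 2 ^ (j - 2) = i / 2 ^ (j - 2) - 1 := by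
      simpa using Nat.sub_mul_div i (2 ^ (j - 2)) 1
    have hmod : (i - 2 ^ (j - 2)) % 2 ^ (j - 2) = 0 := by
      simpa [h0] using Nat.sub_mul_mod hle
    rw [hfac i hi, hfac (i - 2 ^ (j - 2)) (by omega), hdiv, hmod, h0, Function.iterate_zero_apply,
      Function.iterate_zero_apply, piCyc_blockPair,
      Nat.sub_add_cancel ((Nat.one_le_div_iff (by positivity)).mpr (by omega))]

/-- Let `k` be odd, `n ≥ k + 1`, `n0 = n - k + 1`, and `J = {n0, n0+2, …, n-2, n}`.
For `j ∈ J` with `j ≠ n0`, writing `μ(i,j) = i mod 2^{j+1}`,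
`Q^{[j]}_{[i]} = ⌊μ(i,j)/2^{j-2}⌋`, `C^{[j]}_{[i]}` the two-letter factor of
`γ^{n,k}_{[i]}` in positions `j, j-1` from the right, and `r' = μ(i,j) mod 2^{j-2}`:
if `r' ≠ 0` then `(Q^{[j]}_{[i]}, C^{[j]}_{[i]}) = (Q^{[j]}_{[i-1]}, θ(C^{[j]}_{[i-1]}))`,
and if `r' = 0` then
`(Q^{[j]}_{[i]}, C^{[j]}_{[i]}) = π(Q^{[j]}_{[i-2^{j-2}]}, C^{[j]}_{[i-2^{j-2}]})`. -/
theorem statement11 (n k : ℕ) (hk1 : 1 ≤ k) (hk : Odd k) (hn : k + 1 ≤ n) :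
    ∀ j, n - k + 1 < j → j ≤ n → (j - (n - k + 1)) % 2 = 0 →
    ∀ i, 1 ≤ i → i < 2 ^ n →
      (i % 2 ^ (j + 1) % 2 ^ (j - 2) ≠ 0 →
        (i % 2 ^ (j + 1) / 2 ^ (j - 2),
            ((gammaNK n k i).drop (n - j)).take 2) =
          ((i - 1) % 2 ^ (j + 1) / 2 ^ (j - 2),
            cplW (((gammaNK n k (i - 1)).drop (n - j)).take 2))) ∧
      (i % 2 ^ (j + 1) % 2 ^ (j - 2) = 0 →
        (i % 2 ^ (j + 1) / 2 ^ (j - 2),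
            ((gammaNK n k i).drop (n - j)).take 2) =
          piCyc ((i - 2 ^ (j - 2)) % 2 ^ (j + 1) / 2 ^ (j - 2),
            ((gammaNK n k (i - 2 ^ (j - 2))).drop (n - j)).take 2)) :=
  statement11_general n k hk hn
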